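/- Let g: Ω → H be holomorphic with g' nonvanishing and set φ(w) = log(|g'(w)|²/(Im g(w))²). Then the Schwarzian derivative of g satisfies S(g)(w) = φ_{ww}(w) − (1/2)(φ_w(w))², where subscripts denote Wirtinger derivatives with respect to w. -/

import Mathlib

open Complex

/-- Wirtinger derivative ∂f/∂w = (∂f/∂x − i ∂f/∂y)/2 of f : ℂ → ℂ. -/
noncomputable def wderiv (f : ℂ → ℂ) (z : ℂ) : ℂ :=
  (fderiv ℝ f z 1 - Complex.I * fderiv ℝ f z Complex.I) / 2

/-- The Schwarzian derivative S(f) = f'''/f' − (3/2)(f''/f')². -/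
noncomputable def schwarzian (f : ℂ → ℂ) (z : ℂ) : ℂ :=
  deriv (deriv (deriv f)) z / deriv f z - (3 / 2) * (deriv (deriv f) z / deriv f z) ^ 2

lemma wderiv_congr_nhds {f h : ℂ → ℂ} {z : ℂ} (hfh : f =ᶠ[nhds z] h) :
    wderiv f z = wderiv h z := by
  unfold wderiv; rw [hfh.fderiv_eq]

lemma wderiv_of_hasFDerivAt {f : ℂ → ℂ} {L : ℂ →L[ℝ] ℂ} {z : ℂ} (h : HasFDerivAt f L z) :
    wderiv f z = (L 1 - Complex.I * L Complex.I) / 2 := by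
  unfold wderiv; rw [h.fderiv]

lemma wderiv_of_hasDerivAt {f : ℂ → ℂ} {c z : ℂ} (h : HasDerivAt f c z) : wderiv f z = c := by
  rw [wderiv_of_hasFDerivAt h.complexToReal_fderiv]
  simp only [ContinuousLinearMap.smul_apply, ContinuousLinearMap.one_apply, smul_eq_mul]
  linear_combination (-(c/2)) * Complex.I_sq

lemma wderiv_comp {h f : ℂ → ℂ} {z : ℂ} (hh : DifferentiableAt ℂ h (f z))
    (hf : DifferentiableAt ℝ f z) :
    wderiv (fun x => h (f x)) z = deriv h (f z) * wderiv f z := by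
  have H : HasFDerivAt (fun x => h (f x)) ((deriv h (f z) • (1 : ℂ →L[ℝ] ℂ)).comp (fderiv ℝ f z)) z :=
    (hh.hasDerivAt.complexToReal_fderiv).comp z hf.hasFDerivAt
  rw [wderiv_of_hasFDerivAt H]
  unfold wderiv
  simp only [ContinuousLinearMap.coe_comp', Function.comp_apply,
    ContinuousLinearMap.smul_apply, ContinuousLinearMap.one_apply, smul_eq_mul]
  ring

lemma wderiv_add {f g : ℂ → ℂ} {z : ℂ} (hf : DifferentiableAt ℝ f z)
    (hg : DifferentiableAt ℝ g z) :
    wderiv (fun x => f x + g x) z = wderiv f z + wderiv g z := by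
  unfold wderiv
  rw [fderiv_fun_add hf hg]
  simp only [ContinuousLinearMap.add_apply]
  ring

lemma wderiv_sub {f g : ℂ → ℂ} {z : ℂ} (hf : DifferentiableAt ℝ f z)
    (hg : DifferentiableAt ℝ g z) :
    wderiv (fun x => f x - g x) z = wderiv f z - wderiv g z := by
  unfold wderiv
  rw [fderiv_fun_sub hf hg]
  simp only [ContinuousLinearMap.sub_apply]
  ring

lemma wderiv_mul {f g : ℂ → ℂ} {z : ℂ} (hf : DifferentiableAt ℝ f z)
    (hg : DifferentiableAt ℝ g z) :
    wderiv (fun x => f x * g x) z = f z * wderiv g z + g z * wderiv f z := by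
  unfold wderiv
  rw [fderiv_fun_mul hf hg]
  simp only [ContinuousLinearMap.add_apply, ContinuousLinearMap.smul_apply, smul_eq_mul]
  ring

lemma wderiv_const_mul {f : ℂ → ℂ} (c : ℂ) {z : ℂ} (hf : DifferentiableAt ℝ f z) :
    wderiv (fun x => c * f x) z = c * wderiv f z := by
  unfold wderiv
  rw [fderiv_const_mul hf c]
  simp only [ContinuousLinearMap.smul_apply, smul_eq_mul]
  ring

lemma wderiv_ofReal_log_im {f : ℂ → ℂ} {c z : ℂ} (hf : HasDerivAt f c z) (h0 : 0 < (f z).im) :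
    wderiv (fun x => ((Real.log ((f x).im) : ℝ) : ℂ)) z
      = - (Complex.I * c) / (2 * ((f z).im : ℂ)) := by
  have h1 : HasFDerivAt (fun x => (f x).im) (Complex.imCLM.comp (c • (1 : ℂ →L[ℝ] ℂ))) z :=
    Complex.imCLM.hasFDerivAt.comp z hf.complexToReal_fderiv
  have h2 : HasFDerivAt (fun x => Real.log ((f x).im))
      (((f z).im)⁻¹ • (Complex.imCLM.comp (c • (1 : ℂ →L[ℝ] ℂ)))) z :=
    by have := (Real.hasDerivAt_log (ne_of_gt h0)).comp_hasFDerivAt z h1; exact this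
  have h3 : HasFDerivAt (fun x => ((Real.log ((f x).im) : ℝ) : ℂ))
      (Complex.ofRealCLM.comp (((f z).im)⁻¹ • (Complex.imCLM.comp (c • (1 : ℂ →L[ℝ] ℂ))))) z :=
    Complex.ofRealCLM.hasFDerivAt.comp z h2
  rw [wderiv_of_hasFDerivAt h3]
  have hm : ((f z).im : ℂ) ≠ 0 := by
    simpa using (ne_of_gt h0)
  simp only [ContinuousLinearMap.coe_comp', Function.comp_apply,
    ContinuousLinearMap.smul_apply, ContinuousLinearMap.one_apply, smul_eq_mul,
    Complex.imCLM_apply, Complex.ofRealCLM_apply, mul_one]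
  rw [div_eq_div_iff (by norm_num) (by simpa using hm)]
  push_cast
  simp only [Complex.ext_iff, Complex.mul_re, Complex.mul_im, Complex.sub_re, Complex.sub_im,
    Complex.ofReal_re, Complex.ofReal_im, Complex.I_re, Complex.I_im, Complex.neg_re,
    Complex.neg_im, Complex.inv_re, Complex.inv_im, Complex.mul_I_im, Complex.mul_I_re,
    Complex.normSq_ofReal]
  constructor <;> field_simp <;> ring

lemma wderiv_ofReal_im {f : ℂ → ℂ} {c z : ℂ} (hf : HasDerivAt f c z) :
    wderiv (fun x => (((f x).im : ℝ) : ℂ)) z = - (Complex.I * c) / 2 := by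
  have h3 : HasFDerivAt (fun x => (((f x).im : ℝ) : ℂ))
      (Complex.ofRealCLM.comp (Complex.imCLM.comp (c • (1 : ℂ →L[ℝ] ℂ)))) z :=
    Complex.ofRealCLM.hasFDerivAt.comp z
      (Complex.imCLM.hasFDerivAt.comp z hf.complexToReal_fderiv)
  rw [wderiv_of_hasFDerivAt h3]
  simp only [ContinuousLinearMap.coe_comp', Function.comp_apply,
    ContinuousLinearMap.smul_apply, ContinuousLinearMap.one_apply, smul_eq_mul,
    Complex.imCLM_apply, Complex.ofRealCLM_apply, mul_one]
  simp only [Complex.ext_iff, Complex.mul_re, Complex.mul_im, Complex.sub_re, Complex.sub_im,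
    Complex.ofReal_re, Complex.ofReal_im, Complex.I_re, Complex.I_im, Complex.neg_re,
    Complex.neg_im, Complex.div_re, Complex.div_im, Complex.mul_I_im, Complex.mul_I_re,
    Complex.normSq_ofReal]
  norm_num

lemma wderiv_ofReal_log_normSq {f : ℂ → ℂ} {c z : ℂ} (hf : HasDerivAt f c z)
    (h0 : f z ≠ 0) :
    wderiv (fun x => ((Real.log (Complex.normSq (f x)) : ℝ) : ℂ)) z = c / f z := by
  have hre : HasFDerivAt (fun x => (f x).re) (Complex.reCLM.comp (c • (1 : ℂ →L[ℝ] ℂ))) z :=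
    Complex.reCLM.hasFDerivAt.comp z hf.complexToReal_fderiv
  have him : HasFDerivAt (fun x => (f x).im) (Complex.imCLM.comp (c • (1 : ℂ →L[ℝ] ℂ))) z :=
    Complex.imCLM.hasFDerivAt.comp z hf.complexToReal_fderiv
  have hN : HasFDerivAt (fun x => Complex.normSq (f x))
      (((f z).re • (Complex.reCLM.comp (c • (1 : ℂ →L[ℝ] ℂ)))
        + (f z).re • (Complex.reCLM.comp (c • (1 : ℂ →L[ℝ] ℂ))))
       + ((f z).im • (Complex.imCLM.comp (c • (1 : ℂ →L[ℝ] ℂ)))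
        + (f z).im • (Complex.imCLM.comp (c • (1 : ℂ →L[ℝ] ℂ))))) z := by
    simp only [Complex.normSq_apply]
    exact (hre.mul hre).add (him.mul him)
  have hN0 : Complex.normSq (f z) ≠ 0 := by
    simpa [Complex.normSq_eq_zero] using h0
  have h2 := (Real.hasDerivAt_log hN0).comp_hasFDerivAt z hN
  have h3 : HasFDerivAt (fun x => ((Real.log (Complex.normSq (f x)) : ℝ) : ℂ))
      (Complex.ofRealCLM.comp ((Complex.normSq (f z))⁻¹ •
        ((f z).re • (Complex.reCLM.comp (c • (1 : ℂ →L[ℝ] ℂ)))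
          + (f z).re • (Complex.reCLM.comp (c • (1 : ℂ →L[ℝ] ℂ)))
          + ((f z).im • (Complex.imCLM.comp (c • (1 : ℂ →L[ℝ] ℂ)))
            + (f z).im • (Complex.imCLM.comp (c • (1 : ℂ →L[ℝ] ℂ))))))) z :=
    Complex.ofRealCLM.hasFDerivAt.comp z h2
  rw [wderiv_of_hasFDerivAt h3]
  rw [eq_div_iff h0]
  simp only [ContinuousLinearMap.coe_comp', Function.comp_apply,
    ContinuousLinearMap.smul_apply, ContinuousLinearMap.add_apply,
    ContinuousLinearMap.one_apply, smul_eq_mul,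
    Complex.imCLM_apply, Complex.reCLM_apply, Complex.ofRealCLM_apply, mul_one]
  simp only [Complex.ext_iff, Complex.mul_re, Complex.mul_im, Complex.sub_re, Complex.sub_im,
    Complex.ofReal_re, Complex.ofReal_im, Complex.I_re, Complex.I_im, Complex.neg_re,
    Complex.neg_im, Complex.div_re, Complex.div_im, Complex.mul_I_im, Complex.mul_I_re,
    Complex.normSq_ofReal, Complex.add_re, Complex.add_im]
  have hexp : Complex.normSq (f z) = (f z).re * (f z).re + (f z).im * (f z).im :=
    Complex.normSq_apply _
  norm_num
  constructor <;> field_simp <;> rw [hexp] <;> ring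

lemma diff_ofReal_log_normSq {f : ℂ → ℂ} {z : ℂ} (hf : DifferentiableAt ℂ f z)
    (h0 : f z ≠ 0) :
    DifferentiableAt ℝ (fun x => ((Real.log (Complex.normSq (f x)) : ℝ) : ℂ)) z := by
  have hfr : DifferentiableAt ℝ f z := hf.restrictScalars ℝ
  have hre : DifferentiableAt ℝ (fun x => (f x).re) z :=
    Complex.reCLM.differentiableAt.comp z hfr
  have him : DifferentiableAt ℝ (fun x => (f x).im) z :=
    Complex.imCLM.differentiableAt.comp z hfr
  have hN : DifferentiableAt ℝ (fun x => Complex.normSq (f x)) z := by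
    simp only [Complex.normSq_apply]
    exact (hre.mul hre).add (him.mul him)
  have hN0 : Complex.normSq (f z) ≠ 0 := by simpa [Complex.normSq_eq_zero] using h0
  exact Complex.ofRealCLM.differentiableAt.comp z (by have := (Real.differentiableAt_log hN0).comp z hN; exact this)

lemma diff_ofReal_log_im {f : ℂ → ℂ} {z : ℂ} (hf : DifferentiableAt ℂ f z)
    (h0 : (f z).im ≠ 0) :
    DifferentiableAt ℝ (fun x => ((Real.log ((f x).im) : ℝ) : ℂ)) z := by
  have him : DifferentiableAt ℝ (fun x => (f x).im) z :=
    Complex.imCLM.differentiableAt.comp z (hf.restrictScalars ℝ)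
  exact Complex.ofRealCLM.differentiableAt.comp z (by have := (Real.differentiableAt_log h0).comp z him; exact this)

lemma diff_ofReal_im {f : ℂ → ℂ} {z : ℂ} (hf : DifferentiableAt ℂ f z) :
    DifferentiableAt ℝ (fun x => (((f x).im : ℝ) : ℂ)) z :=
  Complex.ofRealCLM.differentiableAt.comp z
    (Complex.imCLM.differentiableAt.comp z (hf.restrictScalars ℝ))
/-- If g : Ω → H is holomorphic into the upper half-plane with nonvanishing
derivative and φ(w) = log(|g'(w)|²/(Im g(w))²), then
S(g)(w) = φ_{ww}(w) − (1/2)(φ_w(w))². -/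
theorem schwarzian_eq_phi_ww_sub_half_phi_w_sq (Ω : Set ℂ) (hΩ : IsOpen Ω)
    (g : ℂ → ℂ) (hg : DifferentiableOn ℂ g Ω) (hmaps : ∀ w ∈ Ω, 0 < (g w).im)
    (hg' : ∀ w ∈ Ω, deriv g w ≠ 0) :
    ∀ w ∈ Ω,
      schwarzian g w =
        wderiv (wderiv (fun z =>
            ((Real.log (‖deriv g z‖ ^ 2 / (g z).im ^ 2) : ℝ) : ℂ))) w -
          (1 / 2) * (wderiv (fun z =>
            ((Real.log (‖deriv g z‖ ^ 2 / (g z).im ^ 2) : ℝ) : ℂ)) w) ^ 2 := by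
  intro w hw
  have hanG : AnalyticOnNhd ℂ g Ω := hg.analyticOnNhd hΩ
  have hanU : AnalyticOnNhd ℂ (deriv g) Ω := hanG.deriv
  have hanU2 : AnalyticOnNhd ℂ (deriv (deriv g)) Ω := hanU.deriv
  set φ : ℂ → ℂ :=
    fun z => ((Real.log (‖deriv g z‖ ^ 2 / (g z).im ^ 2) : ℝ) : ℂ) with hφ
  -- Step A : value of the first Wirtinger derivative on Ω
  have hstep1 : ∀ z ∈ Ω, wderiv φ z = deriv (deriv g) z / deriv g z
      + Complex.I * deriv g z / (((g z).im : ℝ) : ℂ) := by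
    intro z hz
    have hgz : DifferentiableAt ℂ g z := hg.differentiableAt (hΩ.mem_nhds hz)
    have huz : DifferentiableAt ℂ (deriv g) z := (hanU z hz).differentiableAt
    have hu0 : deriv g z ≠ 0 := hg' z hz
    have him : 0 < (g z).im := hmaps z hz
    have heq : φ =ᶠ[nhds z] fun x =>
        ((Real.log (Complex.normSq (deriv g x)) : ℝ) : ℂ)
          - 2 * ((Real.log ((g x).im) : ℝ) : ℂ) := by
      filter_upwards [hΩ.mem_nhds hz] with x hx
      have h1 : ‖deriv g x‖ ^ 2 ≠ 0 := by
        simpa using hg' x hx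
      have h2 : ((g x).im) ^ 2 ≠ 0 := pow_ne_zero _ (ne_of_gt (hmaps x hx))
      show ((Real.log (‖deriv g x‖ ^ 2 / (g x).im ^ 2) : ℝ) : ℂ) = _
      rw [Real.log_div h1 h2, ← Complex.sq_norm, Real.log_pow, Real.log_pow]
      push_cast
      ring
    rw [wderiv_congr_nhds heq]
    have d1 := diff_ofReal_log_normSq huz hu0
    have d2' := diff_ofReal_log_im hgz (ne_of_gt him)
    have d2 : DifferentiableAt ℝ (fun x => (2:ℂ) * ((Real.log ((g x).im) : ℝ) : ℂ)) z :=
      d2'.const_mul 2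
    rw [wderiv_sub d1 d2, wderiv_const_mul 2 d2',
      wderiv_ofReal_log_normSq huz.hasDerivAt hu0,
      wderiv_ofReal_log_im hgz.hasDerivAt him]
    have hm : (((g z).im : ℝ) : ℂ) ≠ 0 := by
      simpa using ne_of_gt him
    field_simp
    ring
  -- Step B : congruence for the second Wirtinger derivative
  have hww : wderiv (wderiv φ) w = wderiv (fun z => deriv (deriv g) z / deriv g z
      + Complex.I * deriv g z / (((g z).im : ℝ) : ℂ)) w := by
    apply wderiv_congr_nhds
    filter_upwards [hΩ.mem_nhds hw] with x hx
    exact hstep1 x hx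
  -- data at w
  have hgw : DifferentiableAt ℂ g w := hg.differentiableAt (hΩ.mem_nhds hw)
  have huw : DifferentiableAt ℂ (deriv g) w := (hanU w hw).differentiableAt
  have hu2w : DifferentiableAt ℂ (deriv (deriv g)) w := (hanU2 w hw).differentiableAt
  have hu0 : deriv g w ≠ 0 := hg' w hw
  have him : 0 < (g w).im := hmaps w hw
  have hm0 : (((g w).im : ℝ) : ℂ) ≠ 0 := by simpa using ne_of_gt him
  -- Step C : compute the second Wirtinger derivative at w
  have hA : HasDerivAt (fun z => deriv (deriv g) z / deriv g z)
      ((deriv (deriv (deriv g)) w * deriv g w - deriv (deriv g) w * deriv (deriv g) w)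
        / (deriv g w) ^ 2) w :=
    hu2w.hasDerivAt.div huw.hasDerivAt hu0
  have hmdiff : DifferentiableAt ℝ (fun z => (((g z).im : ℝ) : ℂ)) w := diff_ofReal_im hgw
  have hinv : DifferentiableAt ℂ (fun y : ℂ => y⁻¹) ((((g w).im : ℝ) : ℂ)) :=
    differentiableAt_inv_iff.mpr hm0
  have hminv : DifferentiableAt ℝ (fun z => ((((g z).im : ℝ) : ℂ))⁻¹) w :=
    (hinv.restrictScalars ℝ).comp w hmdiff
  have hwm : wderiv (fun z => (((g z).im : ℝ) : ℂ)) w = -(Complex.I * deriv g w) / 2 :=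
    wderiv_ofReal_im hgw.hasDerivAt
  have hwminv : wderiv (fun z => ((((g z).im : ℝ) : ℂ))⁻¹) w
      = -(((((g w).im : ℝ) : ℂ)) ^ 2)⁻¹ * (-(Complex.I * deriv g w) / 2) := by
    rw [wderiv_comp hinv hmdiff, deriv_inv, hwm]
  have dA : DifferentiableAt ℝ (fun z => deriv (deriv g) z / deriv g z) w :=
    hA.differentiableAt.restrictScalars ℝ
  have dIu : DifferentiableAt ℝ (fun z => Complex.I * deriv g z) w :=
    (huw.const_mul Complex.I).restrictScalars ℝ
  have dB : DifferentiableAt ℝ (fun z => (Complex.I * deriv g z)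
      * ((((g z).im : ℝ) : ℂ))⁻¹) w := dIu.mul hminv
  have hwIu : wderiv (fun z => Complex.I * deriv g z) w = Complex.I * deriv (deriv g) w :=
    wderiv_of_hasDerivAt (huw.hasDerivAt.const_mul Complex.I)
  have hsplit : (fun z => deriv (deriv g) z / deriv g z
      + Complex.I * deriv g z / (((g z).im : ℝ) : ℂ))
      = (fun z => deriv (deriv g) z / deriv g z
        + (Complex.I * deriv g z) * ((((g z).im : ℝ) : ℂ))⁻¹) := by
    funext x; ring
  rw [hww, hsplit, wderiv_add dA dB, wderiv_of_hasDerivAt hA, wderiv_mul dIu hminv,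
    hwminv, hwIu, hstep1 w hw]
  unfold schwarzian
  field_simp
  ring_nf
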